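/- arXiv:2502.12543 — 5 statements merged into one kernel-verified Lean document; each statement's English description precedes it below -/
import Mathlib

section
/- For any real number γ > -3 and any δ > 0, there exists a constant C > 0 (depending on γ and δ) such that for all v ∈ ℝ³, ∫_{ℝ³} |v - v'|^γ e^{-δ|v'|²} dv' ≤ C ⟨v⟩^γ, where ⟨v⟩ = (1+|v|²)^{1/2}. -/
/-!
Split the kernel as `‖w‖ ^ γ ≤ 𝟙_{‖w‖ < 1} ‖w‖ ^ γ + 2 ^ |γ/2| ⟨w⟩ ^ γ`. The singular piece is
integrable since `γ > -3`, and on its support `v'` is within distance `1` of `v`, where the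
Gaussian `exp (-δ ‖v'‖²)` is `O(⟨v⟩ ^ γ)`. For the smooth piece, Peetre's inequality
`⟨v - v'⟩ ^ γ ≤ 2 ^ |γ/2| ⟨v⟩ ^ γ ⟨v'⟩ ^ |γ|` leaves a finite moment of the Gaussian.
Both Gaussian facts come from `(1 + x) ^ s * exp (-δ x)` being bounded on `x ≥ 0`.
-/

open MeasureTheory Real Metric

theorem one_add_norm_sq_le_two_mul {E : Type*} [SeminormedAddCommGroup E] (x y : E) :
    1 + ‖x‖ ^ 2 ≤ 2 * (1 + ‖y‖ ^ 2) * (1 + ‖x - y‖ ^ 2) := by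
  have hx : ‖x‖ ≤ ‖y‖ + ‖x - y‖ := norm_le_insert' x y
  nlinarith [norm_nonneg x, norm_nonneg y, norm_nonneg (x - y), sq_nonneg (‖y‖ - ‖x - y‖),
    mul_nonneg (sq_nonneg ‖y‖) (sq_nonneg ‖x - y‖)]

theorem one_add_norm_sq_rpow_le {E : Type*} [SeminormedAddCommGroup E] (x y : E) (s : ℝ) :
    (1 + ‖x‖ ^ 2) ^ s ≤ 2 ^ |s| * (1 + ‖y‖ ^ 2) ^ s * (1 + ‖x - y‖ ^ 2) ^ |s| := by
  rcases le_or_gt 0 s with hs | hs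
  · rw [abs_of_nonneg hs, ← mul_rpow (by norm_num) (by positivity),
      ← mul_rpow (by positivity) (by positivity)]
    exact rpow_le_rpow (by positivity) (one_add_norm_sq_le_two_mul x y) hs
  · have hinv : (1 + ‖x‖ ^ 2)⁻¹ ≤ 2 * (1 + ‖y‖ ^ 2)⁻¹ * (1 + ‖x - y‖ ^ 2) := by
      have := one_add_norm_sq_le_two_mul y x
      rw [norm_sub_rev] at this
      field_simp
      linarith
    have rpow_eq_inv_rpow_neg (a : ℝ) (ha : 0 ≤ a) : a ^ s = a⁻¹ ^ (-s) := by
      rw [inv_rpow ha, rpow_neg ha, inv_inv]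
    rw [abs_of_neg hs, rpow_eq_inv_rpow_neg _ (by positivity),
      rpow_eq_inv_rpow_neg (1 + ‖y‖ ^ 2) (by positivity), ← mul_rpow (by norm_num) (by positivity),
      ← mul_rpow (by positivity) (by positivity)]
    exact rpow_le_rpow (by positivity) hinv (by linarith)

theorem rpow_le_two_rpow_abs_mul_rpow {a b : ℝ} (t : ℝ) (ha : 0 < a) (hab : a ≤ b)
    (hba : b ≤ 2 * a) : a ^ t ≤ 2 ^ |t| * b ^ t := by
  rcases le_or_gt 0 t with ht | ht
  · calc a ^ t ≤ 1 * b ^ t := by rw [one_mul]; exact rpow_le_rpow ha.le hab ht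
      _ ≤ 2 ^ |t| * b ^ t :=
        mul_le_mul_of_nonneg_right (one_le_rpow (by norm_num) (abs_nonneg t))
          (rpow_nonneg (ha.le.trans hab) t)
  · calc a ^ t ≤ (b / 2) ^ t := rpow_le_rpow_of_nonpos (by linarith) (by linarith) ht.le
      _ = 2 ^ |t| * b ^ t := by
        rw [div_rpow (by linarith) (by norm_num), abs_of_neg ht, rpow_neg (by norm_num),
          div_eq_inv_mul]

theorem norm_rpow_le_indicator_add {E : Type*} [SeminormedAddCommGroup E] (γ : ℝ) (w : E) :
    ‖w‖ ^ γ ≤ (ball (0 : E) 1).indicator (‖·‖ ^ γ) w + 2 ^ |γ / 2| * (1 + ‖w‖ ^ 2) ^ (γ / 2) := by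
  by_cases hw : w ∈ ball (0 : E) 1
  · rw [Set.indicator_of_mem hw]
    exact le_add_of_nonneg_right (by positivity)
  · have h1 : 1 ≤ ‖w‖ := by simpa using hw
    have hsq : ‖w‖ ^ γ = (‖w‖ ^ 2) ^ (γ / 2) := by
      rw [← rpow_natCast_mul (norm_nonneg w)]
      ring_nf
    rw [Set.indicator_of_notMem hw, zero_add, hsq]
    exact rpow_le_two_rpow_abs_mul_rpow _ (by positivity) (by linarith) (by nlinarith)

theorem exists_one_add_rpow_mul_exp_neg_le (s : ℝ) {δ : ℝ} (hδ : 0 < δ) :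
    ∃ B, ∀ x : ℝ, 0 ≤ x → (1 + x) ^ s * exp (-δ * x) ≤ B := by
  set n := ⌈s⌉₊
  refine ⟨n.factorial / δ ^ n * exp δ, fun x hx => ?_⟩
  have hpow : (1 + x) ^ s ≤ (1 + x) ^ n := by
    rw [← rpow_natCast]
    exact rpow_le_rpow_of_exponent_le (by linarith) (Nat.le_ceil s)
  calc (1 + x) ^ s * exp (-δ * x)
      ≤ (1 + x) ^ n * exp (-δ * x) := by gcongr
    _ = n.factorial / δ ^ n * ((δ * (1 + x)) ^ n / n.factorial) * exp (-δ * x) := by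
        rw [mul_pow]
        field_simp
    _ ≤ n.factorial / δ ^ n * exp (δ * (1 + x)) * exp (-δ * x) := by
        gcongr
        exact pow_div_factorial_le_exp _ (by positivity) n
    _ = n.factorial / δ ^ n * exp δ := by
        rw [mul_assoc, ← exp_add]
        ring_nf

theorem exists_exp_neg_mul_norm_sq_le_mul_rpow {E : Type*} [SeminormedAddCommGroup E] (s : ℝ)
    {δ : ℝ} (hδ : 0 < δ) :
    ∃ A, ∀ v w : E, ‖v - w‖ ≤ 1 → exp (-δ * ‖w‖ ^ 2) ≤ A * (1 + ‖v‖ ^ 2) ^ s := by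
  obtain ⟨B, hB⟩ := exists_one_add_rpow_mul_exp_neg_le (-s) hδ
  refine ⟨2 ^ |s| * 2 ^ |s| * B, fun v w hvw => ?_⟩
  have hpeetre : (1 + ‖v‖ ^ 2) ^ (-s) ≤ 2 ^ |s| * 2 ^ |s| * (1 + ‖w‖ ^ 2) ^ (-s) := by
    have hclose : (1 + ‖v - w‖ ^ 2) ^ |s| ≤ 2 ^ |s| :=
      rpow_le_rpow (by positivity) (by nlinarith [norm_nonneg (v - w)]) (abs_nonneg s)
    calc (1 + ‖v‖ ^ 2) ^ (-s)
        ≤ 2 ^ |s| * (1 + ‖w‖ ^ 2) ^ (-s) * (1 + ‖v - w‖ ^ 2) ^ |s| := by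
          simpa only [abs_neg] using one_add_norm_sq_rpow_le v w (-s)
      _ ≤ 2 ^ |s| * (1 + ‖w‖ ^ 2) ^ (-s) * 2 ^ |s| := by gcongr
      _ = 2 ^ |s| * 2 ^ |s| * (1 + ‖w‖ ^ 2) ^ (-s) := by ring
  calc exp (-δ * ‖w‖ ^ 2)
      = (1 + ‖v‖ ^ 2) ^ s * ((1 + ‖v‖ ^ 2) ^ (-s) * exp (-δ * ‖w‖ ^ 2)) := by
        rw [← mul_assoc, ← rpow_add (by positivity), add_neg_cancel, rpow_zero, one_mul]
    _ ≤ (1 + ‖v‖ ^ 2) ^ s * (2 ^ |s| * 2 ^ |s| * (1 + ‖w‖ ^ 2) ^ (-s) * exp (-δ * ‖w‖ ^ 2)) := by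
        gcongr
    _ ≤ (1 + ‖v‖ ^ 2) ^ s * (2 ^ |s| * 2 ^ |s| * B) := by
        rw [mul_assoc (2 ^ |s| * 2 ^ |s|)]
        gcongr
        exact hB _ (by positivity)
    _ = 2 ^ |s| * 2 ^ |s| * B * (1 + ‖v‖ ^ 2) ^ s := by ring

theorem exists_norm_sub_rpow_mul_exp_le {E : Type*} [SeminormedAddCommGroup E] (γ : ℝ) {δ : ℝ}
    (hδ : 0 < δ) :
    ∃ A, ∀ v v' : E, ‖v - v'‖ ^ γ * exp (-δ * ‖v'‖ ^ 2) ≤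
      (1 + ‖v‖ ^ 2) ^ (γ / 2) * (A * (ball (0 : E) 1).indicator (‖·‖ ^ γ) (v - v') +
        2 ^ |γ / 2| * 2 ^ |γ / 2| * ((1 + ‖v'‖ ^ 2) ^ |γ / 2| * exp (-δ * ‖v'‖ ^ 2))) := by
  obtain ⟨A, hA⟩ := exists_exp_neg_mul_norm_sq_le_mul_rpow (E := E) (γ / 2) hδ
  refine ⟨A, fun v v' => ?_⟩
  set k := (ball (0 : E) 1).indicator (‖·‖ ^ γ) (v - v')
  set g := exp (-δ * ‖v'‖ ^ 2)
  have near : k * g ≤ (1 + ‖v‖ ^ 2) ^ (γ / 2) * (A * k) := by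
    by_cases hv' : v - v' ∈ ball (0 : E) 1
    · calc k * g ≤ k * (A * (1 + ‖v‖ ^ 2) ^ (γ / 2)) :=
            mul_le_mul_of_nonneg_left (hA v v' (by simpa using (mem_ball_zero_iff.1 hv').le))
              (Set.indicator_nonneg (fun _ _ => by positivity) _)
        _ = (1 + ‖v‖ ^ 2) ^ (γ / 2) * (A * k) := by ring
    · simp [k, Set.indicator_of_notMem hv']
  have far : (1 + ‖v - v'‖ ^ 2) ^ (γ / 2) ≤
      2 ^ |γ / 2| * (1 + ‖v‖ ^ 2) ^ (γ / 2) * (1 + ‖v'‖ ^ 2) ^ |γ / 2| := by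
    simpa only [sub_sub_cancel_left, norm_neg] using one_add_norm_sq_rpow_le (v - v') v (γ / 2)
  calc ‖v - v'‖ ^ γ * g
      ≤ (k + 2 ^ |γ / 2| * (1 + ‖v - v'‖ ^ 2) ^ (γ / 2)) * g := by
        gcongr
        exact norm_rpow_le_indicator_add γ (v - v')
    _ = k * g + 2 ^ |γ / 2| * ((1 + ‖v - v'‖ ^ 2) ^ (γ / 2) * g) := by ring
    _ ≤ (1 + ‖v‖ ^ 2) ^ (γ / 2) * (A * k) +
          2 ^ |γ / 2| * (2 ^ |γ / 2| * (1 + ‖v‖ ^ 2) ^ (γ / 2) * (1 + ‖v'‖ ^ 2) ^ |γ / 2| * g) := by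
        gcongr
    _ = _ := by ring

section HaarMeasure

variable {E : Type*} [NormedAddCommGroup E] [NormedSpace ℝ E] [FiniteDimensional ℝ E]
  [MeasurableSpace E] [BorelSpace E] {μ : Measure E} [μ.IsAddHaarMeasure]

theorem integrable_one_add_norm_sq_rpow_mul_exp_neg (s : ℝ) {δ : ℝ} (hδ : 0 < δ) :
    Integrable (fun u : E => (1 + ‖u‖ ^ 2) ^ s * exp (-δ * ‖u‖ ^ 2)) μ := by
  set r : ℝ := Module.finrank ℝ E + 1
  obtain ⟨B, hB⟩ := exists_one_add_rpow_mul_exp_neg_le (s + r / 2) hδ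
  refine ((integrable_rpow_neg_one_add_norm_sq (μ := μ) (r := r) (by linarith)).const_mul B).mono'
    (by fun_prop) (.of_forall fun u => ?_)
  rw [norm_of_nonneg (by positivity)]
  calc (1 + ‖u‖ ^ 2) ^ s * exp (-δ * ‖u‖ ^ 2)
      = (1 + ‖u‖ ^ 2) ^ (s + r / 2) * exp (-δ * ‖u‖ ^ 2) * (1 + ‖u‖ ^ 2) ^ (-r / 2) := by
        rw [mul_right_comm, ← rpow_add (by positivity)]
        ring_nf
    _ ≤ B * (1 + ‖u‖ ^ 2) ^ (-r / 2) := by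
        gcongr
        exact hB _ (by positivity)

theorem integrable_indicator_ball_norm_rpow [Nontrivial E] {γ : ℝ}
    (hγ : -(Module.finrank ℝ E : ℝ) < γ) :
    Integrable ((ball (0 : E) 1).indicator (‖·‖ ^ γ)) μ := by
  refine (integrable_indicator_iff measurableSet_ball).2
    (integrableOn_ball_of_norm_le_rpow (C := 1) (α := -γ) Module.finrank_pos (by linarith)
      (.of_forall fun w => ?_) (measurable_norm.pow_const γ).aestronglyMeasurable)
  rw [neg_neg, one_mul, norm_of_nonneg (by positivity)]

theorem exists_integral_norm_sub_rpow_mul_exp_le [Nontrivial E] {γ δ : ℝ}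
    (hγ : -(Module.finrank ℝ E : ℝ) < γ) (hδ : 0 < δ) :
    ∃ C, ∀ v : E, ∫ v', ‖v - v'‖ ^ γ * exp (-δ * ‖v'‖ ^ 2) ∂μ ≤ C * (1 + ‖v‖ ^ 2) ^ (γ / 2) := by
  obtain ⟨A, hA⟩ := exists_norm_sub_rpow_mul_exp_le (E := E) γ hδ
  set k : E → ℝ := (ball (0 : E) 1).indicator (‖·‖ ^ γ)
  set m : E → ℝ := fun u => (1 + ‖u‖ ^ 2) ^ |γ / 2| * exp (-δ * ‖u‖ ^ 2)
  set c : ℝ := 2 ^ |γ / 2| * 2 ^ |γ / 2|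
  have hk : Integrable k μ := integrable_indicator_ball_norm_rpow hγ
  have hm : Integrable m μ := integrable_one_add_norm_sq_rpow_mul_exp_neg _ hδ
  refine ⟨A * ∫ w, k w ∂μ + c * ∫ u, m u ∂μ, fun v => ?_⟩
  have hbound : Integrable (fun v' => A * k (v - v') + c * m v') μ :=
    ((hk.comp_sub_left v).const_mul A).add (hm.const_mul c)
  calc ∫ v', ‖v - v'‖ ^ γ * exp (-δ * ‖v'‖ ^ 2) ∂μ
      ≤ ∫ v', (1 + ‖v‖ ^ 2) ^ (γ / 2) * (A * k (v - v') + c * m v') ∂μ :=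
        integral_mono_of_nonneg (.of_forall fun _ => by positivity) (hbound.const_mul _)
          (.of_forall (hA v))
    _ = (A * ∫ w, k w ∂μ + c * ∫ u, m u ∂μ) * (1 + ‖v‖ ^ 2) ^ (γ / 2) := by
        rw [integral_const_mul, integral_add ((hk.comp_sub_left v).const_mul A) (hm.const_mul c),
          integral_const_mul, integral_const_mul, integral_sub_left_eq_self k μ v, mul_comm]

end HaarMeasure

/-- Singular convolution estimate: for `γ > -3` and `δ > 0`, the convolution of
`|v|^γ` with a Gaussian is bounded by `C⟨v⟩^γ`. -/
theorem singular_integration (γ δ : ℝ) (hγ : -3 < γ) (hδ : 0 < δ) :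
    ∃ C > 0, ∀ v : Fin 3 → ℝ,
      (∫ v' : Fin 3 → ℝ,
          (∑ i, (v i - v' i) ^ 2) ^ (γ / 2) * Real.exp (-δ * ∑ i, v' i ^ 2)) ≤
        C * (1 + ∑ i, v i ^ 2) ^ (γ / 2) := by
  obtain ⟨C, hC⟩ := exists_integral_norm_sub_rpow_mul_exp_le
    (μ := (volume : Measure (EuclideanSpace ℝ (Fin 3)))) (by simpa using hγ) hδ
  refine ⟨max C 1, by positivity, fun v => ?_⟩
  have hnorm (x : Fin 3 → ℝ) : ∑ i, x i ^ 2 = ‖WithLp.toLp 2 x‖ ^ 2 := by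
    simp [EuclideanSpace.norm_sq_eq]
  have hrpow (z : EuclideanSpace ℝ (Fin 3)) : (‖z‖ ^ 2) ^ (γ / 2) = ‖z‖ ^ γ := by
    rw [← rpow_natCast_mul (norm_nonneg z)]
    ring_nf
  calc _ = ∫ v' : EuclideanSpace ℝ (Fin 3), ‖WithLp.toLp 2 v - v'‖ ^ γ * exp (-δ * ‖v'‖ ^ 2) := by
        rw [← (PiLp.volume_preserving_toLp (Fin 3)).integral_comp
          (MeasurableEquiv.toLp 2 (Fin 3 → ℝ)).measurableEmbedding]
        simp_rw [hnorm, ← hrpow]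
        rfl
    _ ≤ C * (1 + ‖WithLp.toLp 2 v‖ ^ 2) ^ (γ / 2) := hC _
    _ ≤ max C 1 * (1 + ∑ i, v i ^ 2) ^ (γ / 2) := by
        rw [hnorm]
        gcongr
        exact le_max_left C 1
end

section
/- Let σ ≥ 1 be a real number and let m ≥ 4 be an integer. Then ∑_{p=2}^{m-1} C(m,p) · ((p-2)! · (m-p-2)!)^σ ≤ 64 · ((m-2)!)^σ, where C(m,p) is the binomial coefficient. -/
open Nat

lemma basel (n : ℕ) : ∑ k ∈ Finset.Icc 1 n, (1:ℝ)/(k:ℝ)^2 ≤ 2 := by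
  have h : ∀ n : ℕ, 1 ≤ n → ∑ k ∈ Finset.Icc 1 n, (1:ℝ)/(k:ℝ)^2 ≤ 2 - 1/n := by
    intro n hn
    induction n, hn using Nat.le_induction with
    | base => norm_num
    | succ n hn ih =>
      rw [Finset.sum_Icc_succ_top (by omega)]
      have h1 : (0:ℝ) < n := by exact_mod_cast hn
      have h2 : (0:ℝ) < (n:ℝ)+1 := by linarith
      have h3 : (1:ℝ)/((n:ℕ)+1:ℝ)^2 ≤ 1/n - 1/(n+1) := by
        rw [div_sub_div _ _ (ne_of_gt h1) (ne_of_gt h2)]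
        rw [div_le_div_iff₀ (by positivity) (by positivity)]
        ring_nf
        nlinarith
      push_cast at h3 ⊢
      linarith [ih]
  rcases Nat.eq_zero_or_pos n with h0 | h0
  · simp [h0]
  · have hc : (0:ℝ) < n := by exact_mod_cast h0
    linarith [h n h0, one_div_pos.mpr hc]

lemma core (x y : ℝ) (hx : 1 ≤ x) (hy : 1 ≤ y) :
    1 / ((x+1)*x*((y+1)*y)) ≤ 1 / ((x+y+2)*(x+y)) * (2*(1/x^2 + 1/y^2)) := by
  have hx0 : (0:ℝ) < x := by linarith
  have hy0 : (0:ℝ) < y := by linarith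
  have h2 : 1/((x+y+2)*(x+y)) * (2*(1/x^2+1/y^2))
      = (2*(x^2+y^2)) / ((x+y+2)*(x+y)*(x^2*y^2)) := by
    field_simp; ring
  rw [h2, div_le_div_iff₀ (by positivity) (by positivity), one_mul]
  nlinarith [sq_nonneg (x-y), sq_nonneg (x+y), mul_pos hx0 hy0, sq_nonneg (x*y-1),
    mul_pos (mul_pos hx0 hy0) (mul_pos hx0 hy0),
    mul_le_mul_of_nonneg_left (sq_nonneg (x-y)) (mul_pos hx0 hy0).le]

lemma perp (q r : ℕ) :
    ((q+r+4).choose (q+2) : ℝ) * ((q.factorial : ℝ) * (r.factorial : ℝ)) ≤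
      ((q+r+4).factorial : ℝ) / (((q:ℝ)+(r:ℝ)+4)*((q:ℝ)+(r:ℝ)+2)) *
        (2*(1/((q:ℝ)+1)^2 + 1/((r:ℝ)+1)^2)) := by
  have hid : (q+r+4).choose (q+2) * (q.factorial * r.factorial) *
      ((q+2)*((q+1)*((r+2)*(r+1)))) = (q+r+4).factorial := by
    have h := Nat.choose_mul_factorial_mul_factorial (show q+2 ≤ q+r+4 by omega)
    have hsub : q+r+4 - (q+2) = r+2 := by omega
    rw [hsub, Nat.factorial_succ, Nat.factorial_succ, Nat.factorial_succ,
      Nat.factorial_succ] at h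
    rw [← h]; ring
  have hD : (0:ℝ) < (((q:ℝ)+1)+1)*((q:ℝ)+1)*((((r:ℝ)+1)+1)*((r:ℝ)+1)) := by positivity
  have hLHS : ((q+r+4).choose (q+2) : ℝ) * ((q.factorial : ℝ) * (r.factorial : ℝ))
      = ((q+r+4).factorial : ℝ) / ((((q:ℝ)+1)+1)*((q:ℝ)+1)*((((r:ℝ)+1)+1)*((r:ℝ)+1))) := by
    rw [eq_div_iff hD.ne']
    have hc := congrArg (Nat.cast : ℕ → ℝ) hid
    push_cast at hc
    linarith [hc]
  have hM : (0:ℝ) ≤ ((q+r+4).factorial : ℝ) := by positivity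
  have hcore := core ((q:ℝ)+1) ((r:ℝ)+1) (by linarith [Nat.cast_nonneg (α := ℝ) q])
    (by linarith [Nat.cast_nonneg (α := ℝ) r])
  have hmul := mul_le_mul_of_nonneg_left hcore hM
  rw [hLHS]
  calc ((q+r+4).factorial : ℝ) / ((((q:ℝ)+1)+1)*((q:ℝ)+1)*((((r:ℝ)+1)+1)*((r:ℝ)+1)))
      = ((q+r+4).factorial : ℝ) * (1 / ((((q:ℝ)+1)+1)*((q:ℝ)+1)*((((r:ℝ)+1)+1)*((r:ℝ)+1)))) := by
        ring
    _ ≤ ((q+r+4).factorial : ℝ) * (1 / ((((q:ℝ)+1)+((r:ℝ)+1)+2)*(((q:ℝ)+1)+((r:ℝ)+1))) *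
        (2*(1/((q:ℝ)+1)^2 + 1/((r:ℝ)+1)^2))) := hmul
    _ = ((q+r+4).factorial : ℝ) / (((q:ℝ)+(r:ℝ)+4)*((q:ℝ)+(r:ℝ)+2)) *
        (2*(1/((q:ℝ)+1)^2 + 1/((r:ℝ)+1)^2)) := by ring

lemma sumA (m : ℕ) (hm : 4 ≤ m) :
    ∑ p ∈ Finset.Icc 2 (m-1),
        (m.choose p : ℝ) * (((p-2).factorial * (m-p-2).factorial : ℕ) : ℝ)
      ≤ 64 * ((m-2).factorial : ℝ) := by
  have hm4 : (4:ℝ) ≤ (m:ℝ) := by exact_mod_cast hm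
  have hsplit : m - 1 = (m-2) + 1 := by omega
  rw [hsplit, Finset.sum_Icc_succ_top (by omega)]
  -- top term bound
  have htopN : m.choose (m-2+1) * ((m-2+1-2).factorial * (m-(m-2+1)-2).factorial)
      ≤ 2 * (m-2).factorial := by
    have e1 : m - 2 + 1 - 2 = m - 3 := by omega
    have e2 : m - (m-2+1) - 2 = 0 := by omega
    have e3 : m - 2 + 1 = m - 1 := by omega
    rw [e1, e2, e3]
    have e4 : m.choose (m-1) = m := by
      rw [Nat.choose_symm (show 1 ≤ m by omega), Nat.choose_one_right]
    rw [e4]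
    have e5 : 2 * (m-2).factorial = (2*(m-2)) * (m-3).factorial := by
      rw [show m-2 = (m-3)+1 by omega, Nat.factorial_succ]; ring_nf
    rw [e5]
    simp only [Nat.factorial_zero, mul_one]
    exact Nat.mul_le_mul_right _ (by omega)
  have htop : (m.choose (m-2+1) : ℝ) *
      (((m-2+1-2).factorial * (m-(m-2+1)-2).factorial : ℕ) : ℝ)
      ≤ 2 * ((m-2).factorial : ℝ) := by
    exact_mod_cast Nat.cast_le.mpr htopN
  have hmain : ∑ p ∈ Finset.Icc 2 (m-2),
      (m.choose p : ℝ) * (((p-2).factorial * (m-p-2).factorial : ℕ) : ℝ)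
      ≤ 62 * ((m-2).factorial : ℝ) := by
    set K := (m.factorial : ℝ)/((m:ℝ)*((m:ℝ)-2)) with hK
    have hKnn : (0:ℝ) ≤ K := by
      apply div_nonneg (by positivity)
      nlinarith
    have step1 : ∀ p ∈ Finset.Icc 2 (m-2),
        (m.choose p : ℝ) * (((p-2).factorial * (m-p-2).factorial : ℕ) : ℝ)
        ≤ K * (2*(1/((p:ℝ)-1)^2 + 1/((m:ℝ)-(p:ℝ)-1)^2)) := by
      intro p hp
      simp only [Finset.mem_Icc] at hp
      obtain ⟨q, rfl⟩ : ∃ q, p = q + 2 := ⟨p-2, by omega⟩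
      obtain ⟨r, rfl⟩ : ∃ r, m = q + r + 4 := ⟨m-(q+2)-2, by omega⟩
      have e1 : q + 2 - 2 = q := by omega
      have e2 : q + r + 4 - (q+2) - 2 = r := by omega
      rw [e1, e2, hK]
      have h := perp q r
      push_cast at h ⊢
      ring_nf at h ⊢
      linarith [h]
    have hS1 : ∑ p ∈ Finset.Icc 2 (m-2), (1:ℝ)/((p:ℝ)-1)^2
        = ∑ k ∈ Finset.Icc 1 (m-3), (1:ℝ)/(k:ℝ)^2 := by
      apply Finset.sum_nbij' (i := fun p => p - 1) (j := fun k => k + 1)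
      · intro a ha; simp only [Finset.mem_Icc] at *; omega
      · intro a ha; simp only [Finset.mem_Icc] at *; omega
      · intro a ha; simp only [Finset.mem_Icc] at ha; omega
      · intro a ha; simp only [Finset.mem_Icc] at ha; omega
      · intro a ha
        simp only [Finset.mem_Icc] at ha
        rw [Nat.cast_sub (by omega)]
        norm_num
    have hS2 : ∑ p ∈ Finset.Icc 2 (m-2), (1:ℝ)/((m:ℝ)-(p:ℝ)-1)^2
        = ∑ p ∈ Finset.Icc 2 (m-2), (1:ℝ)/((p:ℝ)-1)^2 := by
      apply Finset.sum_nbij' (i := fun p => m - p) (j := fun k => m - k)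
      · intro a ha; simp only [Finset.mem_Icc] at *; omega
      · intro a ha; simp only [Finset.mem_Icc] at *; omega
      · intro a ha; simp only [Finset.mem_Icc] at ha; omega
      · intro a ha; simp only [Finset.mem_Icc] at ha; omega
      · intro a ha
        simp only [Finset.mem_Icc] at ha
        rw [Nat.cast_sub (by omega)]
    calc ∑ p ∈ Finset.Icc 2 (m-2),
          (m.choose p : ℝ) * (((p-2).factorial * (m-p-2).factorial : ℕ) : ℝ)
        ≤ ∑ p ∈ Finset.Icc 2 (m-2), K * (2*(1/((p:ℝ)-1)^2 + 1/((m:ℝ)-(p:ℝ)-1)^2)) :=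
          Finset.sum_le_sum step1
      _ = (K*2) * ((∑ p ∈ Finset.Icc 2 (m-2), (1:ℝ)/((p:ℝ)-1)^2) +
          (∑ p ∈ Finset.Icc 2 (m-2), (1:ℝ)/((m:ℝ)-(p:ℝ)-1)^2)) := by
          rw [← Finset.sum_add_distrib, Finset.mul_sum]
          apply Finset.sum_congr rfl
          intro p _; ring
      _ ≤ (K*2) * 4 := by
          apply mul_le_mul_of_nonneg_left _ (by positivity)
          rw [hS2, hS1]
          linarith [basel (m-3)]
      _ ≤ 62 * ((m-2).factorial : ℝ) := by
          have hf : (m.factorial : ℝ) = (m:ℝ) * (((m:ℝ)-1) * ((m-2).factorial : ℝ)) := by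
            have : m.factorial = m * ((m-1) * (m-2).factorial) := by
              conv_lhs => rw [show m = (m-2)+1+1 by omega]
              rw [Nat.factorial_succ, Nat.factorial_succ,
                show (m-2)+1+1 = m by omega, show (m-2)+1 = m-1 by omega]
            rw [this]
            push_cast [Nat.cast_sub (show 1 ≤ m by omega)]
            ring
          rw [hK, hf]
          have hfac1 : (1:ℝ) ≤ ((m-2).factorial : ℝ) := by
            exact_mod_cast Nat.one_le_iff_ne_zero.mpr (Nat.factorial_pos _).ne'
          rw [div_mul_eq_mul_div, div_mul_eq_mul_div, div_le_iff₀ (by nlinarith)]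
          nlinarith [hfac1, hm4]
  calc (∑ p ∈ Finset.Icc 2 (m-2),
        (m.choose p : ℝ) * (((p-2).factorial * (m-p-2).factorial : ℕ) : ℝ)) +
        (m.choose (m-2+1) : ℝ) * (((m-2+1-2).factorial * (m-(m-2+1)-2).factorial : ℕ) : ℝ)
      ≤ 62 * ((m-2).factorial : ℝ) + 2 * ((m-2).factorial : ℝ) := add_le_add hmain htop
    _ = 64 * ((m-2).factorial : ℝ) := by ring

theorem sum_binom_factorial_pow_le (σ : ℝ) (hσ : 1 ≤ σ) (m : ℕ) (hm : 4 ≤ m) :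
    ∑ p ∈ Finset.Icc 2 (m - 1),
        (m.choose p : ℝ) * (((p - 2).factorial * (m - p - 2).factorial : ℕ) : ℝ) ^ σ ≤
      64 * ((m - 2).factorial : ℝ) ^ σ := by
  have hNpos : (0:ℝ) < ((m-2).factorial : ℝ) := by exact_mod_cast Nat.factorial_pos _
  have hstep : ∀ p ∈ Finset.Icc 2 (m-1),
      (m.choose p : ℝ) * (((p - 2).factorial * (m - p - 2).factorial : ℕ) : ℝ) ^ σ ≤
      ((m-2).factorial : ℝ) ^ (σ-1) *
        ((m.choose p : ℝ) * (((p - 2).factorial * (m - p - 2).factorial : ℕ) : ℝ)) := by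
    intro p hp
    simp only [Finset.mem_Icc] at hp
    have hFle : (p-2).factorial * (m-p-2).factorial ≤ (m-2).factorial := by
      calc (p-2).factorial * (m-p-2).factorial ≤ ((p-2)+(m-p-2)).factorial :=
            Nat.le_of_dvd (Nat.factorial_pos _)
              (Nat.factorial_mul_factorial_dvd_factorial_add _ _)
        _ ≤ (m-2).factorial := Nat.factorial_le (by omega)
    have hFpos : (0:ℝ) < (((p-2).factorial * (m-p-2).factorial : ℕ) : ℝ) := by
      exact_mod_cast Nat.mul_pos (Nat.factorial_pos _) (Nat.factorial_pos _)
    have h1 : (((p-2).factorial * (m-p-2).factorial : ℕ) : ℝ) ^ σ ≤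
        ((m-2).factorial : ℝ) ^ (σ-1) * (((p-2).factorial * (m-p-2).factorial : ℕ) : ℝ) := by
      have he : (((p-2).factorial * (m-p-2).factorial : ℕ) : ℝ) ^ σ =
          (((p-2).factorial * (m-p-2).factorial : ℕ) : ℝ) ^ (σ-1) *
          (((p-2).factorial * (m-p-2).factorial : ℕ) : ℝ) := by
        rw [← Real.rpow_add_one hFpos.ne' (σ-1)]; norm_num
      rw [he]
      exact mul_le_mul_of_nonneg_right
        (Real.rpow_le_rpow hFpos.le (by exact_mod_cast hFle) (by linarith)) hFpos.le
    calc (m.choose p : ℝ) * (((p - 2).factorial * (m - p - 2).factorial : ℕ) : ℝ) ^ σ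
        ≤ (m.choose p : ℝ) * (((m-2).factorial : ℝ) ^ (σ-1) *
            (((p-2).factorial * (m-p-2).factorial : ℕ) : ℝ)) :=
          mul_le_mul_of_nonneg_left h1 (by positivity)
      _ = ((m-2).factorial : ℝ) ^ (σ-1) *
            ((m.choose p : ℝ) * (((p - 2).factorial * (m - p - 2).factorial : ℕ) : ℝ)) := by
          ring
  calc ∑ p ∈ Finset.Icc 2 (m - 1),
        (m.choose p : ℝ) * (((p - 2).factorial * (m - p - 2).factorial : ℕ) : ℝ) ^ σ
      ≤ ∑ p ∈ Finset.Icc 2 (m-1), ((m-2).factorial : ℝ) ^ (σ-1) *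
          ((m.choose p : ℝ) * (((p - 2).factorial * (m - p - 2).factorial : ℕ) : ℝ)) :=
        Finset.sum_le_sum hstep
    _ = ((m-2).factorial : ℝ) ^ (σ-1) * ∑ p ∈ Finset.Icc 2 (m-1),
          (m.choose p : ℝ) * (((p - 2).factorial * (m - p - 2).factorial : ℕ) : ℝ) :=
        (Finset.mul_sum _ _ _).symm
    _ ≤ ((m-2).factorial : ℝ) ^ (σ-1) * (64 * ((m-2).factorial : ℝ)) :=
        mul_le_mul_of_nonneg_left (sumA m hm) (Real.rpow_nonneg hNpos.le _)
    _ = 64 * ((m-2).factorial : ℝ) ^ σ := by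
        have he : ((m-2).factorial : ℝ) ^ σ =
            ((m-2).factorial : ℝ) ^ (σ-1) * ((m-2).factorial : ℝ) := by
          rw [← Real.rpow_add_one hNpos.ne' (σ-1)]; norm_num
        rw [he]; ring
end

section
/- For every integer m ≥ 2 and every integer p with 1 ≤ p ≤ m-1, one has C(m,p) · (p-2)! · (m-p-2)! ≤ 4 · (m-2)! · m²/(p²(m-p)²), where for negative arguments (-1)! and (-2)! are interpreted as 1 (i.e., (k)! means max(k,0)! here). -/
lemma aux_sq_fac (p : ℕ) (hp : 1 ≤ p) : p ^ 2 * (p - 2).factorial ≤ 2 * p.factorial := by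
  rcases Nat.lt_or_ge p 2 with h | h
  · interval_cases p <;> simp [Nat.factorial]
  · obtain ⟨k, rfl⟩ := Nat.exists_eq_add_of_le h
    have hf : (2 + k).factorial = (k + 2) * ((k + 1) * k.factorial) := by
      rw [show 2 + k = k + 2 by ring]; simp [Nat.factorial]
    rw [hf, show 2 + k - 2 = k from by omega]
    nlinarith [Nat.factorial_pos k]

lemma nat_bound (m p : ℕ) (hm : 2 ≤ m) (hp1 : 1 ≤ p) (hp2 : p ≤ m - 1) :
    m.choose p * (p - 2).factorial * (m - p - 2).factorial * (p ^ 2 * (m - p) ^ 2)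
      ≤ 4 * (m - 2).factorial * m ^ 2 := by
  have hq1 : 1 ≤ m - p := by omega
  have hpm : p ≤ m := by omega
  have h1 := aux_sq_fac p hp1
  have h2 := aux_sq_fac (m - p) hq1
  have hchoose : m.choose p * p.factorial * (m - p).factorial = m.factorial :=
    Nat.choose_mul_factorial_mul_factorial hpm
  have hmf : m.factorial ≤ (m - 2).factorial * m ^ 2 := by
    obtain ⟨k, rfl⟩ := Nat.exists_eq_add_of_le hm
    have hf : (2 + k).factorial = (k + 2) * ((k + 1) * k.factorial) := by
      rw [show 2 + k = k + 2 by ring]; simp [Nat.factorial]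
    rw [hf, show 2 + k - 2 = k from by omega]
    nlinarith [Nat.factorial_pos k]
  calc m.choose p * (p - 2).factorial * (m - p - 2).factorial * (p ^ 2 * (m - p) ^ 2)
      = m.choose p * (p ^ 2 * (p - 2).factorial) * ((m - p) ^ 2 * (m - p - 2).factorial) := by
        ring
    _ ≤ m.choose p * (2 * p.factorial) * (2 * (m - p).factorial) :=
        Nat.mul_le_mul (Nat.mul_le_mul_left _ h1) h2
    _ = 4 * (m.choose p * p.factorial * (m - p).factorial) := by ring
    _ = 4 * m.factorial := by rw [hchoose]
    _ ≤ 4 * ((m - 2).factorial * m ^ 2) := Nat.mul_le_mul_left _ hmf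
    _ = 4 * (m - 2).factorial * m ^ 2 := by ring

theorem binom_factorial_bound (m p : ℕ) (hm : 2 ≤ m) (hp1 : 1 ≤ p) (hp2 : p ≤ m - 1) :
    (m.choose p : ℝ) * ((p - 2).factorial : ℝ) * ((m - p - 2).factorial : ℝ) ≤
      4 * ((m - 2).factorial : ℝ) * (m : ℝ) ^ 2 / ((p : ℝ) ^ 2 * ((m : ℝ) - p) ^ 2) := by
  have hpm : p ≤ m := by omega
  have hcast : (m : ℝ) - p = ((m - p : ℕ) : ℝ) := by
    rw [Nat.cast_sub hpm]
  have hq1 : 1 ≤ m - p := by omega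
  have hp0 : (0 : ℝ) < (p : ℝ) ^ 2 := by positivity
  have hq0 : (0 : ℝ) < ((m : ℝ) - p) ^ 2 := by
    rw [hcast]
    have : (0:ℝ) < ((m - p : ℕ) : ℝ) := by exact_mod_cast hq1
    positivity
  rw [le_div_iff₀ (by positivity)]
  rw [hcast]
  have := nat_bound m p hm hp1 hp2
  exact_mod_cast this
end

section
/- Let a_{jk}(v) = (δ_{jk}|v|² - v_j v_k)|v|^γ with -3 < γ < 0, and let μ(v) = (2π)^{-3/2}e^{-|v|²/2}. Then there exists C₀ > 0 such that for all j, k ∈ {1,2,3} and all v ∈ ℝ³, |(a_{jk} * (v_k μ))(v)| ≤ C₀ ⟨v⟩^{γ+2}, where the convolution is (a_{jk}*(v_kμ))(v) = ∫ a_{jk}(v-v') v'_k μ(v') dv'. -/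
/-!
Since `|a_{jk}(w)| ≤ |w|^{γ+2}` and `|v'_k| μ(v') ≤ (2π)^{-3/2} e^{-|v'|²/4}`, everything reduces
to the convolution estimate `∫ |v - v'|^β e^{-|v'|²/4} dv' ≲ ⟨v⟩^β` with `β = γ + 2 > -3`, which
holds in any finite-dimensional inner product space as soon as `β > -dim`. It comes from the
pointwise domination of the integrand by `⟨v⟩^β (1_{|v - v'| < 1} |v - v'|^β + e^{-|v'|²/8})`:
for `β ≥ 0` use `|v - v'|² ≤ 2 ⟨v⟩² ⟨v'⟩²`; for `β < 0`, either `|v - v'| ≳ ⟨v⟩`, or else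
`|v'| ≳ ⟨v⟩ - 1` and the Gaussian factor beats every power of `⟨v⟩`.
-/

open MeasureTheory Real Set Metric

/-- The Landau collision kernel matrix `a_{jk}(v) = (δ_{jk}|v|² - v_j v_k)|v|^γ`. -/
noncomputable def landauA (γ : ℝ) (j k : Fin 3) (v : Fin 3 → ℝ) : ℝ :=
  ((if j = k then (1 : ℝ) else 0) * (∑ i, v i ^ 2) - v j * v k) *
    (∑ i, v i ^ 2) ^ (γ / 2)

/-- The standard Maxwellian on `ℝ³`. -/
noncomputable def maxwellian (v : Fin 3 → ℝ) : ℝ :=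
  (2 * π) ^ (-(3 : ℝ) / 2) * Real.exp (-(∑ i, v i ^ 2) / 2)

lemma sq_rpow_div_two {x : ℝ} (hx : 0 ≤ x) (β : ℝ) : (x ^ 2) ^ (β / 2) = x ^ β := by
  rw [← rpow_natCast, ← rpow_mul hx]
  ring_nf

lemma one_add_rpow_le_mul_exp {a ε t : ℝ} (ha : 0 ≤ a) (hε : 0 < ε) (ht : 0 ≤ t) :
    (1 + t) ^ a ≤ (1 + a / ε) ^ a * exp (ε * t) := by
  set s := ε * t / (ε + a) with hs_def
  have hs : 0 ≤ s := by positivity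
  -- `(1 + a / ε) * (1 + s) = 1 + a / ε + t`
  have hsplit : 1 + t ≤ (1 + a / ε) * (1 + s) := by
    rw [hs_def]
    field_simp
    nlinarith
  have hexp : (1 + s) ^ a ≤ exp (ε * t) :=
    calc (1 + s) ^ a ≤ exp s ^ a := by gcongr; linarith [add_one_le_exp s]
      _ = exp (a * s) := by rw [← exp_mul, mul_comm]
      _ ≤ exp (ε * t) := by
        refine exp_le_exp.2 ?_
        rw [hs_def, mul_div_assoc', div_le_iff₀ (by positivity)]
        nlinarith [mul_nonneg hε.le ht]
  calc (1 + t) ^ a ≤ ((1 + a / ε) * (1 + s)) ^ a := by gcongr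
    _ = (1 + a / ε) ^ a * (1 + s) ^ a := mul_rpow (by positivity) (by positivity)
    _ ≤ (1 + a / ε) ^ a * exp (ε * t) := by gcongr

section Pointwise

variable {E : Type*} [NormedAddCommGroup E] {β : ℝ}

lemma rpow_norm_sub_mul_gaussian_le_of_nonneg (hβ : 0 ≤ β) (v v' : E) :
    ‖v - v'‖ ^ β * exp (-‖v'‖ ^ 2 / 4) ≤
      (2 * (1 + 4 * β)) ^ (β / 2) * (1 + ‖v‖ ^ 2) ^ (β / 2) * exp (-‖v'‖ ^ 2 / 8) := by
  have hdist : ‖v - v'‖ ^ 2 ≤ 2 * (1 + ‖v‖ ^ 2) * (1 + ‖v'‖ ^ 2) := by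
    have := pow_le_pow_left₀ (norm_nonneg _) (norm_sub_le v v') 2
    nlinarith [sq_nonneg (‖v‖ - ‖v'‖), mul_nonneg (sq_nonneg ‖v‖) (sq_nonneg ‖v'‖)]
  have hweight : (1 + ‖v'‖ ^ 2) ^ (β / 2) ≤ (1 + 4 * β) ^ (β / 2) * exp (‖v'‖ ^ 2 / 8) := by
    convert one_add_rpow_le_mul_exp (a := β / 2) (ε := 1 / 8) (by positivity) (by norm_num)
      (sq_nonneg ‖v'‖) using 3 <;> ring
  have hexp : exp (‖v'‖ ^ 2 / 8) * exp (-‖v'‖ ^ 2 / 4) = exp (-‖v'‖ ^ 2 / 8) := by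
    rw [← exp_add]; ring_nf
  calc ‖v - v'‖ ^ β * exp (-‖v'‖ ^ 2 / 4)
      = (‖v - v'‖ ^ 2) ^ (β / 2) * exp (-‖v'‖ ^ 2 / 4) := by rw [sq_rpow_div_two (norm_nonneg _)]
    _ ≤ (2 * (1 + ‖v‖ ^ 2) * (1 + ‖v'‖ ^ 2)) ^ (β / 2) * exp (-‖v'‖ ^ 2 / 4) := by gcongr
    _ = 2 ^ (β / 2) * (1 + ‖v‖ ^ 2) ^ (β / 2) * (1 + ‖v'‖ ^ 2) ^ (β / 2) *
          exp (-‖v'‖ ^ 2 / 4) := by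
      rw [mul_rpow (by positivity) (by positivity), mul_rpow (by positivity) (by positivity)]
    _ ≤ 2 ^ (β / 2) * (1 + ‖v‖ ^ 2) ^ (β / 2) * ((1 + 4 * β) ^ (β / 2) * exp (‖v'‖ ^ 2 / 8)) *
          exp (-‖v'‖ ^ 2 / 4) := by gcongr
    _ = (2 * (1 + 4 * β)) ^ (β / 2) * (1 + ‖v‖ ^ 2) ^ (β / 2) * exp (-‖v'‖ ^ 2 / 8) := by
      rw [mul_rpow (by positivity) (by positivity), ← hexp]; ring

lemma rpow_norm_sub_mul_gaussian_le_of_nonpos_of_far (hβ : β ≤ 0) {v v' : E}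
    (hfar : 1 + ‖v‖ ^ 2 ≤ 4 * ‖v - v'‖ ^ 2) :
    ‖v - v'‖ ^ β * exp (-‖v'‖ ^ 2 / 4) ≤
      4 ^ (-β / 2) * (1 + ‖v‖ ^ 2) ^ (β / 2) * exp (-‖v'‖ ^ 2 / 8) := by
  have hkernel : ‖v - v'‖ ^ β ≤ 4 ^ (-β / 2) * (1 + ‖v‖ ^ 2) ^ (β / 2) :=
    calc ‖v - v'‖ ^ β = (‖v - v'‖ ^ 2) ^ (β / 2) := (sq_rpow_div_two (norm_nonneg _) β).symm
      _ ≤ ((1 + ‖v‖ ^ 2) / 4) ^ (β / 2) :=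
        rpow_le_rpow_of_nonpos (by positivity) (by linarith) (by linarith)
      _ = 4 ^ (-β / 2) * (1 + ‖v‖ ^ 2) ^ (β / 2) := by
        rw [div_rpow (by positivity) (by norm_num), neg_div, rpow_neg (by norm_num)]; ring
  have hexp : exp (-‖v'‖ ^ 2 / 4) ≤ exp (-‖v'‖ ^ 2 / 8) :=
    exp_le_exp.2 (by linarith [sq_nonneg ‖v'‖])
  gcongr

lemma rpow_norm_sub_mul_gaussian_le_of_nonpos_of_near (hβ : β ≤ 0) {v v' : E}
    (hnear : 4 * ‖v - v'‖ ^ 2 < 1 + ‖v‖ ^ 2) :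
    ‖v - v'‖ ^ β * exp (-‖v'‖ ^ 2 / 4) ≤
      exp (1 / 32) * (1 - 16 * β) ^ (-β / 2) * (1 + ‖v‖ ^ 2) ^ (β / 2) *
        ((ball 0 1).indicator (fun w => ‖w‖ ^ β) (v - v') + exp (-‖v'‖ ^ 2 / 8)) := by
  set K := exp (1 / 32) * (1 - 16 * β) ^ (-β / 2)
  set g := exp (-‖v'‖ ^ 2 / 8)
  have hv' : ‖v‖ ^ 2 - 1 ≤ 4 * ‖v'‖ ^ 2 := by
    have := pow_le_pow_left₀ (norm_nonneg _) (norm_le_norm_add_norm_sub' v v') 2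
    nlinarith [sq_nonneg (‖v'‖ - ‖v - v'‖)]
  have hweight : (1 + ‖v‖ ^ 2) ^ (-β / 2) ≤ (1 - 16 * β) ^ (-β / 2) * exp (‖v‖ ^ 2 / 32) := by
    convert one_add_rpow_le_mul_exp (a := -β / 2) (ε := 1 / 32) (by linarith) (by norm_num)
      (sq_nonneg ‖v‖) using 3 <;> ring
  have hdecay : g ≤ K * (1 + ‖v‖ ^ 2) ^ (β / 2) := by
    have hpos : 0 < (1 + ‖v‖ ^ 2) ^ (-β / 2) := by positivity
    have hinv : (1 + ‖v‖ ^ 2) ^ (β / 2) = ((1 + ‖v‖ ^ 2) ^ (-β / 2))⁻¹ := by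
      rw [← rpow_neg (by positivity)]; ring_nf
    rw [hinv, ← div_eq_mul_inv, le_div_iff₀ hpos]
    have hg : g ≤ exp (1 / 32 - ‖v‖ ^ 2 / 32) := exp_le_exp.2 (by linarith)
    have he : exp (1 / 32 - ‖v‖ ^ 2 / 32) * exp (‖v‖ ^ 2 / 32) = exp (1 / 32) := by
      rw [← exp_add]; ring_nf
    calc g * (1 + ‖v‖ ^ 2) ^ (-β / 2)
        ≤ exp (1 / 32 - ‖v‖ ^ 2 / 32) * ((1 - 16 * β) ^ (-β / 2) * exp (‖v‖ ^ 2 / 32)) :=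
          mul_le_mul hg hweight hpos.le (exp_pos _).le
      _ = K := by linear_combination (1 - 16 * β) ^ (-β / 2) * he
  have hsing : ‖v - v'‖ ^ β * g ≤ (ball 0 1).indicator (fun w => ‖w‖ ^ β) (v - v') + g := by
    have hg : g ≤ 1 := exp_le_one_iff.2 (by nlinarith [sq_nonneg ‖v'‖])
    by_cases hball : v - v' ∈ ball (0 : E) 1
    · rw [indicator_of_mem hball]
      nlinarith [rpow_nonneg (norm_nonneg (v - v')) β, exp_pos (-‖v'‖ ^ 2 / 8)]
    · rw [indicator_of_notMem hball, zero_add]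
      have h1 : 1 ≤ ‖v - v'‖ := by simpa using hball
      nlinarith [rpow_le_one_of_one_le_of_nonpos h1 hβ, exp_pos (-‖v'‖ ^ 2 / 8)]
  calc ‖v - v'‖ ^ β * exp (-‖v'‖ ^ 2 / 4) = ‖v - v'‖ ^ β * g * g := by
        rw [mul_assoc, ← exp_add]; ring_nf
    _ ≤ ((ball 0 1).indicator (fun w => ‖w‖ ^ β) (v - v') + g) * (K * (1 + ‖v‖ ^ 2) ^ (β / 2)) := by
        gcongr
        exact add_nonneg (indicator_nonneg (fun w _ => by positivity) _) (exp_pos _).le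
    _ = _ := by ring

lemma exists_rpow_norm_sub_mul_gaussian_le (β : ℝ) :
    ∃ C > 0, ∀ v v' : E, ‖v - v'‖ ^ β * exp (-‖v'‖ ^ 2 / 4) ≤
      C * (1 + ‖v‖ ^ 2) ^ (β / 2) *
        ((ball 0 1).indicator (fun w => ‖w‖ ^ β) (v - v') + exp (-‖v'‖ ^ 2 / 8)) := by
  have hind : ∀ v v' : E, 0 ≤ (ball 0 1).indicator (fun w => ‖w‖ ^ β) (v - v') :=
    fun v v' => indicator_nonneg (fun w _ => by positivity) _
  rcases le_total 0 β with hβ | hβ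
  · refine ⟨(2 * (1 + 4 * β)) ^ (β / 2), by positivity, fun v v' => ?_⟩
    refine (rpow_norm_sub_mul_gaussian_le_of_nonneg hβ v v').trans ?_
    gcongr
    exact le_add_of_nonneg_left (hind v v')
  · have hK : 0 < exp (1 / 32) * (1 - 16 * β) ^ (-β / 2) :=
      mul_pos (exp_pos _) (rpow_pos_of_pos (by linarith) _)
    refine ⟨4 ^ (-β / 2) + exp (1 / 32) * (1 - 16 * β) ^ (-β / 2), by positivity,
      fun v v' => ?_⟩
    rcases le_or_gt (1 + ‖v‖ ^ 2) (4 * ‖v - v'‖ ^ 2) with hfar | hnear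
    · refine (rpow_norm_sub_mul_gaussian_le_of_nonpos_of_far hβ hfar).trans ?_
      gcongr
      · exact le_add_of_nonneg_right hK.le
      · exact le_add_of_nonneg_left (hind v v')
    · refine (rpow_norm_sub_mul_gaussian_le_of_nonpos_of_near hβ hnear).trans ?_
      have := hind v v'
      gcongr
      exact le_add_of_nonneg_left (by positivity)

end Pointwise

lemma integrableOn_rpow_norm_ball {E : Type*} [NormedAddCommGroup E] [NormedSpace ℝ E]
    [FiniteDimensional ℝ E] [Nontrivial E] [MeasurableSpace E] [BorelSpace E]
    (μ : Measure E) [μ.IsAddHaarMeasure] {β : ℝ} (hβ : -(Module.finrank ℝ E : ℝ) < β) (r : ℝ) :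
    IntegrableOn (fun x => ‖x‖ ^ β) (ball 0 r) μ := by
  rw [integrableOn_fun_norm_addHaar μ (f := fun y => y ^ β)]
  have hn : 1 ≤ Module.finrank ℝ E := Module.finrank_pos
  have hexp : -1 < ((Module.finrank ℝ E - 1 : ℕ) : ℝ) + β := by
    rw [Nat.cast_sub hn]; push_cast; linarith
  refine ((intervalIntegral.intervalIntegrable_rpow' hexp).1.mono_set Ioo_subset_Ioc_self).congr_fun
    (fun y hy => ?_) measurableSet_Ioo
  dsimp only
  rw [smul_eq_mul, rpow_add hy.1, rpow_natCast]

section Convolution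

variable {V : Type*} [NormedAddCommGroup V] [InnerProductSpace ℝ V] [FiniteDimensional ℝ V]
  [MeasurableSpace V] [BorelSpace V]

lemma integrable_exp_neg_sq_norm_div {c : ℝ} (hc : 0 < c) :
    Integrable fun v : V => exp (-‖v‖ ^ 2 / c) := by
  have h : ∫ v : V, exp (-(1 / c) * ‖v‖ ^ 2) ≠ 0 := by
    rw [GaussianFourier.integral_rexp_neg_mul_sq_norm (by positivity)]; positivity
  convert Integrable.of_integral_ne_zero h using 3
  ring

variable [Nontrivial V] {β : ℝ}

lemma integrable_indicator_rpow_norm_sub_add_gaussian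
    (hβ : -(Module.finrank ℝ V : ℝ) < β) (v : V) :
    Integrable fun v' : V =>
      (ball 0 1).indicator (fun w => ‖w‖ ^ β) (v - v') + exp (-‖v'‖ ^ 2 / 8) :=
  (((integrable_indicator_iff measurableSet_ball).2
    (integrableOn_rpow_norm_ball volume hβ 1)).comp_sub_left v).add
    (integrable_exp_neg_sq_norm_div (by norm_num))

lemma integrable_rpow_norm_sub_mul_gaussian (hβ : -(Module.finrank ℝ V : ℝ) < β) (v : V) :
    Integrable fun v' : V => ‖v - v'‖ ^ β * exp (-‖v'‖ ^ 2 / 4) := by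
  obtain ⟨C, -, hC⟩ := exists_rpow_norm_sub_mul_gaussian_le (E := V) β
  refine (((integrable_indicator_rpow_norm_sub_add_gaussian hβ v).const_mul
    (C * (1 + ‖v‖ ^ 2) ^ (β / 2)))).mono'
    (Measurable.aestronglyMeasurable (by fun_prop))
    (ae_of_all _ fun v' => ?_)
  rw [Real.norm_of_nonneg (by positivity)]
  exact hC v v'

lemma exists_integral_rpow_norm_sub_mul_gaussian_le (hβ : -(Module.finrank ℝ V : ℝ) < β) :
    ∃ C > 0, ∀ v : V,
      ∫ v', ‖v - v'‖ ^ β * exp (-‖v'‖ ^ 2 / 4) ≤ C * (1 + ‖v‖ ^ 2) ^ (β / 2) := by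
  obtain ⟨C, hC, hbound⟩ := exists_rpow_norm_sub_mul_gaussian_le (E := V) β
  set J := ∫ w : V, (ball 0 1).indicator (fun w => ‖w‖ ^ β) w
  set I := ∫ v' : V, exp (-‖v'‖ ^ 2 / 8)
  have hJ : 0 ≤ J := integral_nonneg fun w => indicator_nonneg (fun w _ => by positivity) w
  have hI : 0 < I := integral_exp_pos (integrable_exp_neg_sq_norm_div (by norm_num))
  refine ⟨C * (J + I), by positivity, fun v => ?_⟩
  have hind := ((integrable_indicator_iff measurableSet_ball).2
    (integrableOn_rpow_norm_ball volume hβ 1)).comp_sub_left v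
  calc ∫ v', ‖v - v'‖ ^ β * exp (-‖v'‖ ^ 2 / 4)
      ≤ ∫ v', C * (1 + ‖v‖ ^ 2) ^ (β / 2) *
          ((ball 0 1).indicator (fun w => ‖w‖ ^ β) (v - v') + exp (-‖v'‖ ^ 2 / 8)) :=
        integral_mono (integrable_rpow_norm_sub_mul_gaussian hβ v)
          ((integrable_indicator_rpow_norm_sub_add_gaussian hβ v).const_mul _) (hbound v)
    _ = C * (1 + ‖v‖ ^ 2) ^ (β / 2) * (J + I) := by
        rw [integral_const_mul, integral_add hind (integrable_exp_neg_sq_norm_div (by norm_num)),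
          integral_sub_left_eq_self (fun w => (ball 0 1).indicator (fun w => ‖w‖ ^ β) w)]
    _ = C * (J + I) * (1 + ‖v‖ ^ 2) ^ (β / 2) := by ring

end Convolution

lemma exists_integral_rpow_sum_sq_sub_mul_gaussian_le {ι : Type*} [Fintype ι] [Nonempty ι]
    {β : ℝ} (hβ : -(Fintype.card ι : ℝ) < β) :
    ∃ C > 0, ∀ v : ι → ℝ,
      Integrable (fun v' => (∑ i, (v - v') i ^ 2) ^ (β / 2) * exp (-(∑ i, v' i ^ 2) / 4)) ∧
      ∫ v', (∑ i, (v - v') i ^ 2) ^ (β / 2) * exp (-(∑ i, v' i ^ 2) / 4) ≤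
        C * (1 + ∑ i, v i ^ 2) ^ (β / 2) := by
  have hβ' : -(Module.finrank ℝ (EuclideanSpace ℝ ι) : ℝ) < β := by
    rwa [finrank_euclideanSpace]
  obtain ⟨C, hC, hbound⟩ := exists_integral_rpow_norm_sub_mul_gaussian_le hβ'
  refine ⟨C, hC, fun v => ?_⟩
  have hsum (w : ι → ℝ) : ∑ i, w i ^ 2 = ‖WithLp.toLp 2 w‖ ^ 2 :=
    (EuclideanSpace.real_norm_sq_eq _).symm
  have hpt (v' : ι → ℝ) :
      (∑ i, (v - v') i ^ 2) ^ (β / 2) * exp (-(∑ i, v' i ^ 2) / 4) =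
        ‖WithLp.toLp 2 v - WithLp.toLp 2 v'‖ ^ β * exp (-‖WithLp.toLp 2 v'‖ ^ 2 / 4) := by
    rw [hsum, hsum, WithLp.toLp_sub, sq_rpow_div_two (norm_nonneg _)]
  have hmp := PiLp.volume_preserving_toLp ι
  have hemb := (MeasurableEquiv.toLp 2 (ι → ℝ)).measurableEmbedding
  simp only [hpt]
  rw [hmp.integral_comp hemb (fun x => ‖WithLp.toLp 2 v - x‖ ^ β * exp (-‖x‖ ^ 2 / 4)), hsum v]
  exact ⟨(hmp.integrable_comp_emb hemb).2 (integrable_rpow_norm_sub_mul_gaussian hβ' _),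
    hbound _⟩

lemma abs_landauA_le (γ : ℝ) (j k : Fin 3) (w : Fin 3 → ℝ) :
    |landauA γ j k w| ≤ (∑ i, w i ^ 2) ^ ((γ + 2) / 2) := by
  set Q := ∑ i, w i ^ 2
  have hQ : 0 ≤ Q := by positivity
  have hj : w j ^ 2 ≤ Q := Finset.single_le_sum (fun i _ => sq_nonneg (w i)) (Finset.mem_univ j)
  have hmatrix : |(if j = k then (1 : ℝ) else 0) * Q - w j * w k| ≤ Q := by
    split_ifs with hjk
    · subst hjk
      rw [abs_le]; constructor <;> nlinarith
    · have hjk2 : w j ^ 2 + w k ^ 2 ≤ Q :=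
        (Finset.sum_pair hjk).symm.le.trans <| Finset.sum_le_sum_of_subset_of_nonneg
          (Finset.subset_univ _) (fun i _ _ => sq_nonneg (w i))
      rw [zero_mul, zero_sub, abs_neg, abs_le]
      constructor <;> nlinarith [sq_nonneg (w j + w k), sq_nonneg (w j - w k)]
  have hdef : landauA γ j k w = ((if j = k then (1 : ℝ) else 0) * Q - w j * w k) * Q ^ (γ / 2) :=
    rfl
  calc |landauA γ j k w| = |(if j = k then (1 : ℝ) else 0) * Q - w j * w k| * Q ^ (γ / 2) := by
        rw [hdef, abs_mul, abs_of_nonneg (rpow_nonneg hQ _)]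
    _ ≤ Q * Q ^ (γ / 2) := by gcongr
    _ ≤ Q ^ ((γ + 2) / 2) := by
        rcases hQ.eq_or_lt with h0 | hpos
        · rw [← h0, zero_mul]; positivity
        · rw [show (γ + 2) / 2 = γ / 2 + 1 by ring, rpow_add_one hpos.ne', mul_comm]

lemma abs_le_exp_sq_div_four (t : ℝ) : |t| ≤ exp (t ^ 2 / 4) := by
  nlinarith [add_one_le_exp (t ^ 2 / 4), sq_abs t, sq_nonneg (|t| - 2)]

lemma abs_mul_maxwellian_le (k : Fin 3) (v : Fin 3 → ℝ) :
    |v k| * maxwellian v ≤ (2 * π) ^ (-(3 : ℝ) / 2) * exp (-(∑ i, v i ^ 2) / 4) := by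
  set Q := ∑ i, v i ^ 2
  have hk : v k ^ 2 ≤ Q := Finset.single_le_sum (fun i _ => sq_nonneg (v i)) (Finset.mem_univ k)
  have hmoment : |v k| ≤ exp (Q / 4) :=
    (abs_le_exp_sq_div_four _).trans (exp_le_exp.2 (by linarith))
  have hdef : maxwellian v = (2 * π) ^ (-(3 : ℝ) / 2) * exp (-Q / 2) := rfl
  calc |v k| * maxwellian v ≤ exp (Q / 4) * maxwellian v := by
        gcongr; rw [hdef]; positivity
    _ = (2 * π) ^ (-(3 : ℝ) / 2) * exp (-Q / 4) := by
        rw [hdef, mul_left_comm, ← exp_add]; ring_nf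

lemma abs_landauA_mul_moment_le (γ : ℝ) (j k : Fin 3) (v v' : Fin 3 → ℝ) :
    |landauA γ j k (v - v') * v' k * maxwellian v'| ≤
      (2 * π) ^ (-(3 : ℝ) / 2) *
        ((∑ i, (v - v') i ^ 2) ^ ((γ + 2) / 2) * exp (-(∑ i, v' i ^ 2) / 4)) := by
  have hμ : 0 < maxwellian v' := by rw [maxwellian]; positivity
  calc |landauA γ j k (v - v') * v' k * maxwellian v'|
      = |landauA γ j k (v - v')| * (|v' k| * maxwellian v') := by
        rw [abs_mul, abs_mul, abs_of_pos hμ, mul_assoc]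
    _ ≤ (∑ i, (v - v') i ^ 2) ^ ((γ + 2) / 2) *
          ((2 * π) ^ (-(3 : ℝ) / 2) * exp (-(∑ i, v' i ^ 2) / 4)) :=
        mul_le_mul (abs_landauA_le γ j k (v - v')) (abs_mul_maxwellian_le k v')
          (by positivity) (by positivity)
    _ = _ := by ring

theorem landauA_conv_moment_bound_general (γ : ℝ) (hγ1 : -3 < γ) :
    ∃ C > 0, ∀ (j k : Fin 3) (v : Fin 3 → ℝ),
      |∫ v' : Fin 3 → ℝ, landauA γ j k (v - v') * v' k * maxwellian v'| ≤
        C * (1 + ∑ i, v i ^ 2) ^ ((γ + 2) / 2) := by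
  obtain ⟨C, hC, hconv⟩ :=
    exists_integral_rpow_sum_sq_sub_mul_gaussian_le (ι := Fin 3) (β := γ + 2)
      (by rw [Fintype.card_fin]; push_cast; linarith)
  refine ⟨(2 * π) ^ (-(3 : ℝ) / 2) * C, by positivity, fun j k v => ?_⟩
  obtain ⟨hint, hle⟩ := hconv v
  calc |∫ v', landauA γ j k (v - v') * v' k * maxwellian v'|
      ≤ ∫ v', (2 * π) ^ (-(3 : ℝ) / 2) *
          ((∑ i, (v - v') i ^ 2) ^ ((γ + 2) / 2) * exp (-(∑ i, v' i ^ 2) / 4)) :=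
        (Real.norm_eq_abs _).symm.le.trans <| norm_integral_le_of_norm_le (hint.const_mul _)
          (ae_of_all _ (abs_landauA_mul_moment_le γ j k v))
    _ ≤ (2 * π) ^ (-(3 : ℝ) / 2) * C * (1 + ∑ i, v i ^ 2) ^ ((γ + 2) / 2) := by
        rw [integral_const_mul, mul_assoc]
        gcongr

theorem landauA_conv_moment_bound (γ : ℝ) (hγ1 : -3 < γ) (hγ2 : γ < 0) :
    ∃ C > 0, ∀ (j k : Fin 3) (v : Fin 3 → ℝ),
      |∫ v' : Fin 3 → ℝ, landauA γ j k (v - v') * v' k * maxwellian v'| ≤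
        C * (1 + ∑ i, v i ^ 2) ^ ((γ + 2) / 2) :=
  landauA_conv_moment_bound_general γ hγ1
end

section
/- For every integer m ≥ 2 and real σ ≥ 1, ∑_{p=1}^{m} C(m,p) · √((m-p+3)!) · ((p-3)!)^σ ≤ 400 · ((m-2)!)^σ · D^m for some absolute constant D > 0 (one may take any valid explicit D), where (k)! is interpreted as 1 for k < 0. -/
/-!
Crude bounds suffice since `D` is arbitrary. Using `√x ≤ x` and
`((p-3)!)^σ ≤ (p-3)! · ((m-2)!)^(σ-1)`, the claim reduces to `σ = 1` with the square root dropped.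
Each term `C(m,p) · (m-p+3)! · (p-3)!` is at most `(m+3)³ · C(m,p) · (m-p)! · p! = (m+3)³ · m!`,
and `m! ≤ m² · (m-2)!`; the remaining polynomial factor `m³ (m+3)³` is absorbed by `64^m`.
-/

open Nat

theorem Nat.factorial_le_factorial_sub_mul_pow {n k : ℕ} (h : k ≤ n) :
    n ! ≤ (n - k)! * n ^ k := by
  rw [← Nat.factorial_mul_descFactorial h]
  exact Nat.mul_le_mul_left _ (Nat.descFactorial_le_pow n k)

theorem Nat.choose_mul_factorial_add_three_mul_factorial_sub_three_le {m p : ℕ} (hpm : p ≤ m) :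
    m.choose p * (m - p + 3)! * (p - 3)! ≤ (m + 3) ^ 3 * m ! := by
  have h_add_three : (m - p + 3)! ≤ (m - p)! * (m + 3) ^ 3 :=
    calc (m - p + 3)! ≤ (m - p)! * (m - p + 3) ^ 3 := by
          simpa using Nat.factorial_le_factorial_sub_mul_pow (n := m - p + 3) (k := 3) (by omega)
      _ ≤ (m - p)! * (m + 3) ^ 3 := by gcongr; omega
  calc m.choose p * (m - p + 3)! * (p - 3)!
      ≤ m.choose p * ((m - p)! * (m + 3) ^ 3) * p ! := by
        gcongr
        exact Nat.sub_le p 3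
    _ = (m + 3) ^ 3 * (m.choose p * p ! * (m - p)!) := by ring
    _ = (m + 3) ^ 3 * m ! := by rw [Nat.choose_mul_factorial_mul_factorial hpm]

theorem Nat.pow_three_mul_add_three_pow_three_le (m : ℕ) :
    m ^ 3 * (m + 3) ^ 3 ≤ 27 * 64 ^ m := by
  have hm : m < 2 ^ m := Nat.lt_two_pow_self
  have hm3 : m + 3 ≤ 3 * 2 ^ m := by omega
  calc m ^ 3 * (m + 3) ^ 3 ≤ (2 ^ m) ^ 3 * (3 * 2 ^ m) ^ 3 := by gcongr
    _ = 27 * (2 ^ m) ^ 6 := by ring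
    _ = 27 * 64 ^ m := by rw [pow_right_comm]; norm_num

theorem Nat.sum_choose_mul_factorial_add_three_mul_factorial_sub_three_le {m : ℕ} (hm : 2 ≤ m) :
    ∑ p ∈ Finset.Icc 1 m, m.choose p * (m - p + 3)! * (p - 3)! ≤ 27 * 64 ^ m * (m - 2)! := by
  have h_term : ∀ p ∈ Finset.Icc 1 m,
      m.choose p * (m - p + 3)! * (p - 3)! ≤ (m + 3) ^ 3 * m ^ 2 * (m - 2)! := by
    intro p hp
    calc m.choose p * (m - p + 3)! * (p - 3)! ≤ (m + 3) ^ 3 * m ! :=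
          Nat.choose_mul_factorial_add_three_mul_factorial_sub_three_le (Finset.mem_Icc.mp hp).2
      _ ≤ (m + 3) ^ 3 * ((m - 2)! * m ^ 2) := by
          gcongr
          exact Nat.factorial_le_factorial_sub_mul_pow hm
      _ = (m + 3) ^ 3 * m ^ 2 * (m - 2)! := by ring
  calc ∑ p ∈ Finset.Icc 1 m, m.choose p * (m - p + 3)! * (p - 3)!
      ≤ (Finset.Icc 1 m).card • ((m + 3) ^ 3 * m ^ 2 * (m - 2)!) :=
        Finset.sum_le_card_nsmul _ _ _ h_term
    _ = m ^ 3 * (m + 3) ^ 3 * (m - 2)! := by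
        rw [Nat.card_Icc, Nat.add_sub_cancel, smul_eq_mul]; ring
    _ ≤ 27 * 64 ^ m * (m - 2)! :=
        Nat.mul_le_mul_right _ (Nat.pow_three_mul_add_three_pow_three_le m)

theorem Real.rpow_le_mul_rpow_sub_one {a b σ : ℝ} (ha : 0 ≤ a) (hab : a ≤ b) (hσ : 1 ≤ σ) :
    a ^ σ ≤ a * b ^ (σ - 1) := by
  calc a ^ σ = a * a ^ (σ - 1) := by
        rw [← Real.rpow_one_add' ha (by linarith), add_sub_cancel]
    _ ≤ a * b ^ (σ - 1) := by gcongr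

theorem choose_mul_sqrt_factorial_mul_rpow_le {m p : ℕ} {σ : ℝ} (hpm : p ≤ m) (hσ : 1 ≤ σ) :
    (m.choose p : ℝ) * √((m - p + 3)! : ℝ) * ((p - 3)! : ℝ) ^ σ ≤
      ((m.choose p * (m - p + 3)! * (p - 3)! : ℕ) : ℝ) * ((m - 2)! : ℝ) ^ (σ - 1) := by
  have h_sqrt : √((m - p + 3)! : ℝ) ≤ (m - p + 3)! :=
    Real.sqrt_le_self_iff.mpr (Or.inr (mod_cast Nat.one_le_iff_ne_zero.mpr (factorial_ne_zero _)))
  have h_rpow : ((p - 3)! : ℝ) ^ σ ≤ (p - 3)! * ((m - 2)! : ℝ) ^ (σ - 1) :=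
    Real.rpow_le_mul_rpow_sub_one (by positivity)
      (mod_cast Nat.factorial_le (by omega)) hσ
  calc (m.choose p : ℝ) * √((m - p + 3)! : ℝ) * ((p - 3)! : ℝ) ^ σ
      ≤ (m.choose p : ℝ) * (m - p + 3)! * ((p - 3)! * ((m - 2)! : ℝ) ^ (σ - 1)) := by gcongr
    _ = _ := by push_cast; ring

theorem sum_binom_sqrt_factorial_bound :
    ∃ D > 0, ∀ (m : ℕ) (σ : ℝ), 2 ≤ m → 1 ≤ σ →
      ∑ p ∈ Finset.Icc 1 m,
          (m.choose p : ℝ) * Real.sqrt ((m - p + 3).factorial : ℝ) *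
            ((p - 3).factorial : ℝ) ^ σ ≤
        400 * ((m - 2).factorial : ℝ) ^ σ * D ^ m := by
  refine ⟨64, by norm_num, fun m σ hm hσ => ?_⟩
  have h_sum := Nat.sum_choose_mul_factorial_add_three_mul_factorial_sub_three_le hm
  set b : ℝ := ((m - 2)! : ℝ) with hb_def
  calc _ ≤ ∑ p ∈ Finset.Icc 1 m,
        ((m.choose p * (m - p + 3)! * (p - 3)! : ℕ) : ℝ) * b ^ (σ - 1) :=
        Finset.sum_le_sum fun p hp =>
          choose_mul_sqrt_factorial_mul_rpow_le (Finset.mem_Icc.mp hp).2 hσ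
    _ = ((∑ p ∈ Finset.Icc 1 m, m.choose p * (m - p + 3)! * (p - 3)! : ℕ) : ℝ) * b ^ (σ - 1) := by
        rw [Nat.cast_sum, Finset.sum_mul]
    _ ≤ (27 * 64 ^ m * b) * b ^ (σ - 1) := by gcongr; rw [hb_def]; exact_mod_cast h_sum
    _ = 27 * b ^ σ * 64 ^ m := by
        rw [mul_assoc _ b, ← Real.rpow_one_add' (by positivity) (by linarith), add_sub_cancel]
        ring
    _ ≤ 400 * b ^ σ * 64 ^ m := by gcongr; norm_num
end
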